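/- The system of equations k00 = ρ²e^{-2μ}, k01 = 2ρe^{-μ}(1-ρe^{-μ}), k11 = (1-ρe^{-μ})², where ρ = (k00 + k01/2)/(k00 + k01), has as its unique solution with all entries positive: k00 = (1-√(1-e^{-μ}))², k01 = 2(1-√(1-e^{-μ}))√(1-e^{-μ}), k11 = 1-e^{-μ}. -/

import Mathlib

/-!
A genotype distribution in Hardy–Weinberg form `(x², 2x(1-x), (1-x)²)` has wild-type frequency
`1/(2-x)` among its fit individuals, so the equilibrium equations say exactly that the genotypes are
in Hardy–Weinberg form with `x` a fixed point of `x ↦ e^{-μ}/(2-x)`. The fixed-point equation is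
`(1-x)² = 1-e^{-μ}`, and positivity of the heterozygote frequency forces `0 < x < 1`, which picks
the root `x = 1 - √(1-e^{-μ})`.
-/

open Real

noncomputable section

def fitWildTypeFreq (k00 k01 : ℝ) : ℝ := (k00 + k01 / 2) / (k00 + k01)

def IsHardyWeinberg (k00 k01 k11 x : ℝ) : Prop :=
  k00 = x ^ 2 ∧ k01 = 2 * x * (1 - x) ∧ k11 = (1 - x) ^ 2

end

lemma inv_two_sub_mul_eq_self_iff {x E : ℝ} (hx0 : 0 < x) (hx1 : x < 1) :
    (2 - x)⁻¹ * E = x ↔ x = 1 - √(1 - E) := by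
  have hsqrt : x = 1 - √(1 - E) ↔ √(1 - E) = 1 - x := by constructor <;> intro h <;> linarith
  rw [hsqrt, sqrt_eq_iff_mul_self_eq_of_pos (by linarith),
    inv_mul_eq_iff_eq_mul₀ (by linarith)]
  constructor <;> intro h <;> linarith

namespace IsHardyWeinberg

variable {k00 k01 k11 x : ℝ}

lemma mem_Ioo (h : IsHardyWeinberg k00 k01 k11 x) (h01 : 0 < k01) : x ∈ Set.Ioo 0 1 := by
  obtain ⟨-, rfl, -⟩ := h
  constructor <;> nlinarith

lemma fitWildTypeFreq_eq (h : IsHardyWeinberg k00 k01 k11 x) (h01 : 0 < k01) :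
    fitWildTypeFreq k00 k01 = (2 - x)⁻¹ := by
  obtain ⟨hx0, hx1⟩ := h.mem_Ioo h01
  obtain ⟨rfl, rfl, -⟩ := h
  have : 2 - x ≠ 0 := by linarith
  unfold fitWildTypeFreq
  field_simp
  ring

lemma fitWildTypeFreq_mul_eq_iff (E : ℝ) (h : IsHardyWeinberg k00 k01 k11 x) (h01 : 0 < k01) :
    fitWildTypeFreq k00 k01 * E = x ↔ x = 1 - √(1 - E) := by
  obtain ⟨hx0, hx1⟩ := h.mem_Ioo h01
  rw [h.fitWildTypeFreq_eq h01, inv_two_sub_mul_eq_self_iff hx0 hx1]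

end IsHardyWeinberg

theorem isHardyWeinberg_fitWildTypeFreq_mul_iff {k00 k01 k11 : ℝ} (E : ℝ) (h01 : 0 < k01) :
    IsHardyWeinberg k00 k01 k11 (fitWildTypeFreq k00 k01 * E) ↔
      IsHardyWeinberg k00 k01 k11 (1 - √(1 - E)) := by
  constructor
  · intro h
    rwa [← (h.fitWildTypeFreq_mul_eq_iff E h01).1 rfl]
  · intro h
    rwa [(h.fitWildTypeFreq_mul_eq_iff E h01).2 rfl]

theorem stmt_0_general (μ : ℝ) (hμ : 0 < μ) (k00 k01 k11 : ℝ)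
    (h01 : 0 < k01) :
    (k00 = ((k00 + k01 / 2) / (k00 + k01))^2 * exp (-2*μ) ∧
     k01 = 2 * ((k00 + k01 / 2) / (k00 + k01)) * exp (-μ) *
            (1 - ((k00 + k01 / 2) / (k00 + k01)) * exp (-μ)) ∧
     k11 = (1 - ((k00 + k01 / 2) / (k00 + k01)) * exp (-μ))^2)
    ↔
    (k00 = (1 - Real.sqrt (1 - exp (-μ)))^2 ∧
     k01 = 2 * (1 - Real.sqrt (1 - exp (-μ))) * Real.sqrt (1 - exp (-μ)) ∧
     k11 = 1 - exp (-μ)) := by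
  have hexp : exp (-2 * μ) = exp (-μ) ^ 2 := by rw [← exp_nat_mul]; ring_nf
  have hsqrt : √(1 - exp (-μ)) ^ 2 = 1 - exp (-μ) :=
    sq_sqrt (by linarith [exp_lt_one_iff.mpr (neg_lt_zero.mpr hμ)])
  have key := isHardyWeinberg_fitWildTypeFreq_mul_iff (k00 := k00) (k11 := k11) (exp (-μ)) h01
  simp only [IsHardyWeinberg, fitWildTypeFreq, sub_sub_cancel, hsqrt, mul_pow,
    ← mul_assoc] at key
  rwa [hexp]

/-- The equilibrium system for the one-gene recessive lethal Wright-Fisher model has a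
unique positive solution. -/
theorem stmt_0 (μ : ℝ) (hμ : 0 < μ) (k00 k01 k11 : ℝ)
    (h00 : 0 < k00) (h01 : 0 < k01) (h11 : 0 < k11) :
    (k00 = ((k00 + k01 / 2) / (k00 + k01))^2 * exp (-2*μ) ∧
     k01 = 2 * ((k00 + k01 / 2) / (k00 + k01)) * exp (-μ) *
            (1 - ((k00 + k01 / 2) / (k00 + k01)) * exp (-μ)) ∧
     k11 = (1 - ((k00 + k01 / 2) / (k00 + k01)) * exp (-μ))^2)
    ↔
    (k00 = (1 - Real.sqrt (1 - exp (-μ)))^2 ∧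
     k01 = 2 * (1 - Real.sqrt (1 - exp (-μ))) * Real.sqrt (1 - exp (-μ)) ∧
     k11 = 1 - exp (-μ)) :=
  stmt_0_general μ hμ k00 k01 k11 h01
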